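/- Let K be a field of characteristic zero, α, β ∈ K with β ≠ 0, and suppose λ, μ ∈ K are the roots of t² − αt − β. Let A = A(α,β,1). Then there is a unique K-algebra homomorphism φ : Ã → A with φ(u) = U and φ(ω) = DU − λUD, and φ is injective. -/
import Mathlib


noncomputable section

/-- Defining relations of the down-up algebra `A(α,β,γ)`:
`D = ι 0`, `U = ι 1`, relations `DU² = αUDU + βU²D + γU` and `D²U = αDUD + βUD² + γD`. -/
inductive DownUpRel (K : Type) [Field K] (a b g : K) :
    FreeAlgebra K (Fin 2) → FreeAlgebra K (Fin 2) → Prop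
  | rel1 : DownUpRel K a b g
      (FreeAlgebra.ι K (0 : Fin 2) * FreeAlgebra.ι K (1 : Fin 2) * FreeAlgebra.ι K (1 : Fin 2))
      (a • (FreeAlgebra.ι K (1 : Fin 2) * FreeAlgebra.ι K (0 : Fin 2) * FreeAlgebra.ι K (1 : Fin 2)) +
       b • (FreeAlgebra.ι K (1 : Fin 2) * FreeAlgebra.ι K (1 : Fin 2) * FreeAlgebra.ι K (0 : Fin 2)) +
       g • FreeAlgebra.ι K (1 : Fin 2))
  | rel2 : DownUpRel K a b g
      (FreeAlgebra.ι K (0 : Fin 2) * FreeAlgebra.ι K (0 : Fin 2) * FreeAlgebra.ι K (1 : Fin 2))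
      (a • (FreeAlgebra.ι K (0 : Fin 2) * FreeAlgebra.ι K (1 : Fin 2) * FreeAlgebra.ι K (0 : Fin 2)) +
       b • (FreeAlgebra.ι K (1 : Fin 2) * FreeAlgebra.ι K (0 : Fin 2) * FreeAlgebra.ι K (0 : Fin 2)) +
       g • FreeAlgebra.ι K (0 : Fin 2))

/-- The down-up algebra `A(α,β,γ)`. -/
abbrev DownUp (K : Type) [Field K] (a b g : K) := RingQuot (DownUpRel K a b g)

/-- The generator `D` of `A(α,β,γ)`. -/
def DownUp.D (K : Type) [Field K] (a b g : K) : DownUp K a b g :=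
  RingQuot.mkAlgHom K (DownUpRel K a b g) (FreeAlgebra.ι K (0 : Fin 2))

/-- The generator `U` of `A(α,β,γ)`. -/
def DownUp.U (K : Type) [Field K] (a b g : K) : DownUp K a b g :=
  RingQuot.mkAlgHom K (DownUpRel K a b g) (FreeAlgebra.ι K (1 : Fin 2))

/-- Defining relation of the algebra `Ã = K[u][ω;σ,δ]` with `σ(u) = μ⁻¹u`, `δ(u) = -μ⁻¹u`:
with `u = ι 0` and `ω = ι 1`, the relation is `uω = μ⁻¹ωu − μ⁻¹u`. -/
inductive TildeRel (K : Type) [Field K] (μ : K) :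
    FreeAlgebra K (Fin 2) → FreeAlgebra K (Fin 2) → Prop
  | rel : TildeRel K μ
      (FreeAlgebra.ι K (0 : Fin 2) * FreeAlgebra.ι K (1 : Fin 2))
      (μ⁻¹ • (FreeAlgebra.ι K (1 : Fin 2) * FreeAlgebra.ι K (0 : Fin 2)) -
        μ⁻¹ • FreeAlgebra.ι K (0 : Fin 2))

/-- The algebra `Ã`. -/
abbrev TildeA (K : Type) [Field K] (μ : K) := RingQuot (TildeRel K μ)

/-- The generator `u` of `Ã`. -/
def TildeA.u (K : Type) [Field K] (μ : K) : TildeA K μ :=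
  RingQuot.mkAlgHom K (TildeRel K μ) (FreeAlgebra.ι K (0 : Fin 2))

/-- The generator `ω` of `Ã`. -/
def TildeA.w (K : Type) [Field K] (μ : K) : TildeA K μ :=
  RingQuot.mkAlgHom K (TildeRel K μ) (FreeAlgebra.ι K (1 : Fin 2))

namespace Aux

variable {K : Type} [Field K] {α β lam μ : K}

section DU
variable (K α β)
/-- abbreviations -/
def UU : DownUp K α β 1 := DownUp.U K α β 1
def DD : DownUp K α β 1 := DownUp.D K α β 1
def WW (lam : K) : DownUp K α β 1 := DD K α β * UU K α β - lam • (UU K α β * DD K α β)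
end DU

lemma relA1 : DD K α β * UU K α β * UU K α β
    = α • (UU K α β * DD K α β * UU K α β) + β • (UU K α β * UU K α β * DD K α β) + UU K α β := by
  have := RingQuot.mkAlgHom_rel K (DownUpRel.rel1 (K := K) (a := α) (b := β) (g := 1))
  simpa [DD, UU, DownUp.D, DownUp.U, map_mul, map_add, map_smul] using this

lemma relTA : TildeA.u K μ * TildeA.w K μ
    = μ⁻¹ • (TildeA.w K μ * TildeA.u K μ) - μ⁻¹ • TildeA.u K μ := by
  have := RingQuot.mkAlgHom_rel K (TildeRel.rel (K := K) (μ := μ))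
  simpa [TildeA.u, TildeA.w, map_mul, map_sub, map_smul] using this

lemma WU (hsum : lam + μ = α) (hprod : lam * μ = -β) :
    WW K α β lam * UU K α β = μ • (UU K α β * WW K α β lam) + UU K α β := by
  have hb : β = -(lam * μ) := by rw [hprod]; ring
  subst hb
  subst hsum
  have h1 := relA1 (K := K) (α := lam + μ) (β := -(lam*μ))
  rw [WW, sub_mul, smul_mul_assoc, mul_assoc (UU _ _ _) (DD _ _ _) (UU _ _ _), ← mul_assoc] at *
  rw [h1, mul_sub, mul_smul_comm, ← mul_assoc, ← mul_assoc]
  module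


lemma mu_ne (hβ : β ≠ 0) (hprod : lam * μ = -β) : μ ≠ 0 := by
  rintro rfl; simp at hprod; exact hβ hprod

lemma UW (hβ : β ≠ 0) (hsum : lam + μ = α) (hprod : lam * μ = -β) :
    UU K α β * WW K α β lam = μ⁻¹ • (WW K α β lam * UU K α β) - μ⁻¹ • UU K α β := by
  have hμ := mu_ne hβ hprod
  rw [WU hsum hprod, smul_add, smul_smul, inv_mul_cancel₀ hμ, one_smul]
  abel

/-- the map on the free algebra -/
def fmap (K : Type) [Field K] (α β lam : K) : FreeAlgebra K (Fin 2) →ₐ[K] DownUp K α β 1 :=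
  FreeAlgebra.lift K (fun i => if i = 0 then UU K α β else WW K α β lam)

def phi (K : Type) [Field K] (α β lam μ : K) (hβ : β ≠ 0) (hsum : lam + μ = α)
    (hprod : lam * μ = -β) : TildeA K μ →ₐ[K] DownUp K α β 1 :=
  RingQuot.liftAlgHom K ⟨fmap K α β lam, by
    rintro x y ⟨⟩
    simp only [map_mul, map_sub, map_smul, fmap, FreeAlgebra.lift_ι_apply, if_pos rfl,
      if_neg (by decide : (1 : Fin 2) ≠ 0)]
    exact UW hβ hsum hprod⟩

lemma phi_u (hβ : β ≠ 0) (hsum : lam + μ = α) (hprod : lam * μ = -β) :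
    phi K α β lam μ hβ hsum hprod (TildeA.u K μ) = UU K α β := by
  simp [phi, TildeA.u, RingQuot.liftAlgHom_mkAlgHom_apply, fmap, FreeAlgebra.lift_ι_apply]

lemma phi_w (hβ : β ≠ 0) (hsum : lam + μ = α) (hprod : lam * μ = -β) :
    phi K α β lam μ hβ hsum hprod (TildeA.w K μ) = WW K α β lam := by
  simp [phi, TildeA.w, RingQuot.liftAlgHom_mkAlgHom_apply, fmap, FreeAlgebra.lift_ι_apply,
    if_neg (by decide : (1 : Fin 2) ≠ 0)]

lemma unique_hom (ψ₁ ψ₂ : TildeA K μ →ₐ[K] DownUp K α β 1)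
    (hu : ψ₁ (TildeA.u K μ) = ψ₂ (TildeA.u K μ)) (hw : ψ₁ (TildeA.w K μ) = ψ₂ (TildeA.w K μ)) :
    ψ₁ = ψ₂ := by
  apply RingQuot.ringQuot_ext'
  apply FreeAlgebra.hom_ext
  funext i
  fin_cases i
  · exact hu
  · exact hw


section Span

def mon (K : Type) [Field K] (μ : K) (i j : ℕ) : TildeA K μ :=
  TildeA.w K μ ^ j * TildeA.u K μ ^ i

def MM (K : Type) [Field K] (μ : K) : Submodule K (TildeA K μ) :=
  Submodule.span K (Set.range fun ij : ℕ × ℕ => mon K μ ij.1 ij.2)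

lemma mon_mem (i j : ℕ) : mon K μ i j ∈ MM K μ :=
  Submodule.subset_span ⟨(i, j), rfl⟩

lemma pow_u_w (i : ℕ) : ∃ b : K,
    TildeA.u K μ ^ i * TildeA.w K μ
      = (μ⁻¹) ^ i • (TildeA.w K μ * TildeA.u K μ ^ i) + b • TildeA.u K μ ^ i := by
  induction i with
  | zero => exact ⟨0, by simp⟩
  | succ i ih =>
    obtain ⟨b, hb⟩ := ih
    refine ⟨μ⁻¹ * b - μ⁻¹, ?_⟩
    rw [pow_succ, mul_assoc, relTA, mul_sub, mul_smul_comm, mul_smul_comm, ← mul_assoc, hb,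
      add_mul, smul_mul_assoc, smul_mul_assoc, mul_assoc, ← pow_succ]
    module

lemma MM_mul_u {x : TildeA K μ} (hx : x ∈ MM K μ) : x * TildeA.u K μ ∈ MM K μ := by
  refine Submodule.span_induction ?_ ?_ ?_ ?_ hx
  · rintro _ ⟨⟨i, j⟩, rfl⟩
    simpa [mon, mul_assoc, ← pow_succ] using mon_mem (μ := μ) (i + 1) j
  · simp [MM]
  · intro a b _ _ ha hb; rw [add_mul]; exact add_mem ha hb
  · intro a y _ hy; rw [smul_mul_assoc]; exact Submodule.smul_mem _ _ hy

lemma MM_mul_w {x : TildeA K μ} (hx : x ∈ MM K μ) : x * TildeA.w K μ ∈ MM K μ := by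
  refine Submodule.span_induction ?_ ?_ ?_ ?_ hx
  · rintro _ ⟨⟨i, j⟩, rfl⟩
    obtain ⟨b, hb⟩ := pow_u_w (K := K) (μ := μ) i
    have : mon K μ i j * TildeA.w K μ
        = (μ⁻¹) ^ i • mon K μ i (j + 1) + b • mon K μ i j := by
      simp only [mon]
      rw [mul_assoc, hb, mul_add, mul_smul_comm, mul_smul_comm, ← mul_assoc, ← pow_succ]
    rw [this]
    exact add_mem (Submodule.smul_mem _ _ (mon_mem _ _)) (Submodule.smul_mem _ _ (mon_mem _ _))
  · simp [MM]
  · intro a b _ _ ha hb; rw [add_mul]; exact add_mem ha hb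
  · intro a y _ hy; rw [smul_mul_assoc]; exact Submodule.smul_mem _ _ hy

lemma MM_mul_mon {x : TildeA K μ} (hx : x ∈ MM K μ) (i j : ℕ) :
    x * mon K μ i j ∈ MM K μ := by
  induction i with
  | zero =>
    induction j with
    | zero => simpa [mon] using hx
    | succ j ihj =>
      have : x * mon K μ 0 (j + 1) = (x * mon K μ 0 j) * TildeA.w K μ := by
        simp [mon, pow_succ, mul_assoc]
      rw [this]; exact MM_mul_w ihj
  | succ i ihi =>
    have : x * mon K μ (i + 1) j = (x * mon K μ i j) * TildeA.u K μ := by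
      simp [mon, pow_succ, mul_assoc]
    rw [this]; exact MM_mul_u ihi

lemma MM_mul {x y : TildeA K μ} (hx : x ∈ MM K μ) (hy : y ∈ MM K μ) : x * y ∈ MM K μ := by
  refine Submodule.span_induction ?_ ?_ ?_ ?_ hy
  · rintro _ ⟨⟨i, j⟩, rfl⟩; exact MM_mul_mon hx i j
  · simp
  · intro a b _ _ ha hb; rw [mul_add]; exact add_mem ha hb
  · intro a z _ hz; rw [mul_smul_comm]; exact Submodule.smul_mem _ _ hz

lemma MM_top (x : TildeA K μ) : x ∈ MM K μ := by
  have hadj : Algebra.adjoin K ({TildeA.u K μ, TildeA.w K μ} : Set (TildeA K μ)) = ⊤ := by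
    have h1 : Algebra.adjoin K (Set.range (FreeAlgebra.ι K : Fin 2 → FreeAlgebra K (Fin 2))) = ⊤ :=
      FreeAlgebra.adjoin_range_ι K (Fin 2)
    have h2 : Algebra.adjoin K
        ((RingQuot.mkAlgHom K (TildeRel K μ)) '' Set.range (FreeAlgebra.ι K)) = ⊤ := by
      rw [← AlgHom.map_adjoin, h1, Algebra.map_top,
        (AlgHom.range_eq_top _).mpr (RingQuot.mkAlgHom_surjective K _)]
    rw [← h2]
    congr 1
    ext x
    constructor
    · rintro (rfl | rfl)
      · exact ⟨FreeAlgebra.ι K 0, ⟨0, rfl⟩, rfl⟩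
      · exact ⟨FreeAlgebra.ι K 1, ⟨1, rfl⟩, rfl⟩
    · rintro ⟨_, ⟨i, rfl⟩, rfl⟩
      fin_cases i
      · exact Or.inl rfl
      · exact Or.inr rfl
  have hx : x ∈ Algebra.adjoin K ({TildeA.u K μ, TildeA.w K μ} : Set (TildeA K μ)) := by
    rw [hadj]; trivial
  refine Algebra.adjoin_induction ?_ ?_ ?_ ?_ hx
  · rintro y (rfl | rfl)
    · simpa [mon] using mon_mem (K := K) (μ := μ) 1 0
    · simpa [mon] using mon_mem (K := K) (μ := μ) 0 1
  · intro r
    have : (algebraMap K (TildeA K μ)) r = r • mon K μ 0 0 := by simp [mon, Algebra.smul_def]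
    rw [this]; exact Submodule.smul_mem _ _ (mon_mem _ _)
  · intro a b _ _ ha hb; exact add_mem ha hb
  · intro a b _ _ ha hb; exact MM_mul ha hb

end Span


section Rep

open Polynomial

abbrev V (K : Type) [Field K] := ℕ →₀ Polynomial K

/-- coefficients sequence for the `D` action -/
def cc (α β : K) : ℕ → Polynomial K
  | 0 => 0
  | 1 => X
  | (n+2) => C α * cc α β (n+1) + C β * cc α β n + 1

variable (K) in
def Uop : V K →ₗ[K] V K := Finsupp.lmapDomain _ K (· + 1)

variable (K) in
def Dop (α β : K) : V K →ₗ[K] V K :=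
  Finsupp.lsum K fun n => (Finsupp.lsingle (n - 1)).comp (LinearMap.mulLeft K (cc α β n))

@[simp] lemma Uop_single (n : ℕ) (p : Polynomial K) :
    Uop K (Finsupp.single n p) = Finsupp.single (n + 1) p := by
  simp [Uop, Finsupp.lmapDomain_apply, Finsupp.mapDomain_single]

@[simp] lemma Dop_single (α β : K) (n : ℕ) (p : Polynomial K) :
    Dop K α β (Finsupp.single n p) = Finsupp.single (n - 1) (cc α β n * p) := by
  simp [Dop, Finsupp.lsum_single]

lemma endrel1 (α β : K) :
    (Dop K α β * Uop K * Uop K : Module.End K (V K))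
      = α • (Uop K * Dop K α β * Uop K) + β • (Uop K * Uop K * Dop K α β) + Uop K := by
  apply Finsupp.lhom_ext
  intro n p
  simp only [Module.End.mul_apply, LinearMap.add_apply, LinearMap.smul_apply, Uop_single,
    Dop_single, Nat.add_sub_cancel, Nat.succ_sub_one, Nat.zero_sub, Finsupp.smul_single,
    smul_eq_C_mul]
  cases n <;>
    · simp only [cc, Nat.add_sub_cancel, Nat.succ_sub_one, Nat.zero_sub, Nat.sub_zero, Nat.zero_add, zero_mul,
        mul_zero, Finsupp.single_zero, add_zero, zero_add, map_zero, ← Finsupp.single_add]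
      congr 1
      ring

lemma endrel2 (α β : K) :
    (Dop K α β * Dop K α β * Uop K : Module.End K (V K))
      = α • (Dop K α β * Uop K * Dop K α β) + β • (Uop K * Dop K α β * Dop K α β) + Dop K α β := by
  apply Finsupp.lhom_ext
  intro n p
  simp only [Module.End.mul_apply, LinearMap.add_apply, LinearMap.smul_apply, Uop_single,
    Dop_single, Nat.add_sub_cancel, Nat.succ_sub_one, Nat.zero_sub, Finsupp.smul_single,
    smul_eq_C_mul]
  match n with
  | 0 => simp [cc]
  | 1 =>
    simp only [cc, Nat.add_sub_cancel, Nat.succ_sub_one, Nat.zero_sub, Nat.sub_zero, Nat.zero_add, zero_mul,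
      mul_zero, Finsupp.single_zero, add_zero, zero_add, map_zero, ← Finsupp.single_add]
    congr 1
    ring
  | (k+2) =>
    simp only [cc, Nat.add_sub_cancel, Nat.succ_sub_one, Nat.zero_sub, Nat.sub_zero, Nat.zero_add, zero_mul,
      mul_zero, Finsupp.single_zero, add_zero, zero_add, map_zero, ← Finsupp.single_add]
    congr 1
    ring

variable (K) in
def rho (α β : K) : DownUp K α β 1 →ₐ[K] Module.End K (V K) :=
  RingQuot.liftAlgHom K ⟨FreeAlgebra.lift K (fun i => if i = 0 then Dop K α β else Uop K), by
    rintro x y (h | h)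
    · simp only [map_mul, map_add, map_smul, FreeAlgebra.lift_ι_apply, if_pos rfl,
        if_neg (by decide : (1 : Fin 2) ≠ 0), one_smul]
      exact endrel1 α β
    · simp only [map_mul, map_add, map_smul, FreeAlgebra.lift_ι_apply, if_pos rfl,
        if_neg (by decide : (1 : Fin 2) ≠ 0), one_smul]
      exact endrel2 α β⟩

lemma rho_U (α β : K) : rho K α β (UU K α β) = Uop K := by
  simp [rho, UU, DownUp.U, RingQuot.liftAlgHom_mkAlgHom_apply, FreeAlgebra.lift_ι_apply,
    if_neg (by decide : (1 : Fin 2) ≠ 0)]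

lemma rho_D (α β : K) : rho K α β (DD K α β) = Dop K α β := by
  simp [rho, DD, DownUp.D, RingQuot.liftAlgHom_mkAlgHom_apply, FreeAlgebra.lift_ι_apply]

/-- the eigenvalue polynomial of `ω` -/
def ee (α β lam : K) (n : ℕ) : Polynomial K := cc α β (n + 1) - C lam * cc α β n

variable (K) in
def Wop (α β lam : K) : Module.End K (V K) :=
  Dop K α β * Uop K - lam • (Uop K * Dop K α β)

lemma rho_W (α β lam : K) : rho K α β (WW K α β lam) = Wop K α β lam := by
  simp [WW, Wop, map_sub, map_mul, map_smul, rho_U, rho_D]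

lemma Wop_single (α β lam : K) (n : ℕ) (p : Polynomial K) :
    Wop K α β lam (Finsupp.single n p) = Finsupp.single n (ee α β lam n * p) := by
  cases n with
  | zero =>
    simp only [Wop, LinearMap.sub_apply, Module.End.mul_apply, LinearMap.smul_apply, Uop_single,
      Dop_single, Nat.add_sub_cancel, ee]
    simp [cc, Finsupp.smul_single, smul_eq_C_mul, sub_mul]
  | succ m =>
    simp only [Wop, LinearMap.sub_apply, Module.End.mul_apply, LinearMap.smul_apply, Uop_single,
      Dop_single, Nat.add_sub_cancel, ee, show m + 1 - 1 = m from rfl]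
    rw [Finsupp.smul_single, smul_eq_C_mul, ← Finsupp.single_sub]
    congr 1
    ring

lemma Wop_pow (α β lam : K) (j n : ℕ) (p : Polynomial K) :
    (Wop K α β lam ^ j) (Finsupp.single n p) = Finsupp.single n (ee α β lam n ^ j * p) := by
  induction j with
  | zero => simp
  | succ j ih =>
    rw [pow_succ', Module.End.mul_apply, ih, Wop_single, pow_succ']
    congr 1
    ring

lemma Uop_pow (i : ℕ) :
    (Uop K ^ i) (Finsupp.single 0 (1 : Polynomial K)) = Finsupp.single i 1 := by
  induction i with
  | zero => simp
  | succ i ih => rw [pow_succ', Module.End.mul_apply, ih, Uop_single]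

end Rep


section Poly

open Polynomial

def aaa (α β : K) : ℕ → K
  | 0 => 0
  | 1 => 1
  | (n+2) => α * aaa α β (n+1) + β * aaa α β n

def bbb (α β : K) : ℕ → K
  | 0 => 0
  | 1 => 0
  | (n+2) => α * bbb α β (n+1) + β * bbb α β n + 1

lemma cc_eq (α β : K) : ∀ n, cc α β n = C (aaa α β n) * X + C (bbb α β n)
  | 0 => by simp [cc, aaa, bbb]
  | 1 => by simp [cc, aaa, bbb]
  | (n+2) => by
    rw [show cc α β (n+2) = C α * cc α β (n+1) + C β * cc α β n + 1 from rfl,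
      cc_eq α β (n+1), cc_eq α β n,
      show aaa α β (n+2) = α * aaa α β (n+1) + β * aaa α β n from rfl,
      show bbb α β (n+2) = α * bbb α β (n+1) + β * bbb α β n + 1 from rfl]
    simp only [map_add, map_mul, map_one]
    ring

lemma aaa_rec {α β lam μ : K} (hsum : lam + μ = α) (hprod : lam * μ = -β) (n : ℕ) :
    aaa α β (n + 1) - lam * aaa α β n = μ ^ n := by
  induction n with
  | zero => simp [aaa]
  | succ n ih =>
    rw [show aaa α β (n+2) = α * aaa α β (n+1) + β * aaa α β n from rfl]
    have hb : β = -(lam * μ) := by rw [hprod]; ring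
    subst hb; subst hsum
    rw [pow_succ, ← ih]
    ring

lemma ee_eq {α β lam μ : K} (hsum : lam + μ = α) (hprod : lam * μ = -β) (n : ℕ) :
    ee α β lam n = C (μ ^ n) * X + C (bbb α β (n+1) - lam * bbb α β n) := by
  rw [ee, cc_eq α β (n+1), cc_eq α β n, ← aaa_rec hsum hprod n]
  simp only [map_sub, map_mul]
  ring

lemma ee_poly_inj {α β lam μ : K} (hβ : β ≠ 0) (hsum : lam + μ = α) (hprod : lam * μ = -β)
    (n : ℕ) (q : Polynomial K) (h : aeval (ee α β lam n) q = 0) : q = 0 := by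
  have hμ : μ ≠ 0 := mu_ne hβ hprod
  rw [← comp_eq_aeval] at h
  rcases comp_eq_zero_iff.mp h with h0 | ⟨_, hconst⟩
  · exact h0
  · exfalso
    have h1 : (ee α β lam n).coeff 1 = μ ^ n := by
      rw [ee_eq hsum hprod n, coeff_add, coeff_C_mul, coeff_X_one, coeff_C]
      simp
    have h2 : (C ((ee α β lam n).coeff 0)).coeff 1 = (0 : K) := by simp [coeff_C]
    rw [← hconst, h1] at h2
    exact pow_ne_zero n hμ h2

end Poly

section Inj

open Polynomial

lemma phi_mon (hβ : β ≠ 0) (hsum : lam + μ = α) (hprod : lam * μ = -β) (i j : ℕ) :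
    phi K α β lam μ hβ hsum hprod (mon K μ i j) = WW K α β lam ^ j * UU K α β ^ i := by
  rw [mon, map_mul, map_pow, map_pow, phi_u, phi_w]

lemma rho_phi_mon (hβ : β ≠ 0) (hsum : lam + μ = α) (hprod : lam * μ = -β) (i j : ℕ) :
    (rho K α β (phi K α β lam μ hβ hsum hprod (mon K μ i j))) (Finsupp.single 0 1)
      = Finsupp.single i (ee α β lam i ^ j) := by
  rw [phi_mon, map_mul, map_pow, map_pow, rho_U, rho_W, Module.End.mul_apply, Uop_pow, Wop_pow,
    mul_one]

lemma phi_injective (hβ : β ≠ 0) (hsum : lam + μ = α) (hprod : lam * μ = -β) :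
    Function.Injective (phi K α β lam μ hβ hsum hprod) := by
  set φ := phi K α β lam μ hβ hsum hprod
  rw [injective_iff_map_eq_zero]
  intro x hx
  have hxm : x ∈ MM K μ := MM_top x
  rw [MM, Finsupp.mem_span_range_iff_exists_finsupp] at hxm
  obtain ⟨cf, hcf⟩ := hxm
  -- the image equation in V
  have hV : (cf.sum fun ij a => a • Finsupp.single ij.1 (ee α β lam ij.1 ^ ij.2)) = (0 : V K) := by
    have h1 : (rho K α β (φ x)) (Finsupp.single 0 (1 : Polynomial K)) = 0 := by
      rw [hx, map_zero, LinearMap.zero_apply]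
    rw [← hcf] at h1
    rw [map_finsuppSum, map_finsuppSum] at h1
    rw [← h1]
    rw [LinearMap.finsupp_sum_apply]
    apply Finsupp.sum_congr
    intro ij _
    rw [map_smul, map_smul, LinearMap.smul_apply, rho_phi_mon hβ hsum hprod ij.1 ij.2]
  suffices hc : cf = 0 by
    rw [← hcf, hc, Finsupp.sum_zero_index]
  ext ij
  obtain ⟨i, j⟩ := ij
  -- evaluate coordinate i
  have hVi : (cf.sum fun ij a => a • (if ij.1 = i then ee α β lam i ^ ij.2 else 0)) = (0 : Polynomial K) := by
    have := congrArg (fun v : V K => v i) hV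
    simp only [Finsupp.coe_zero, Pi.zero_apply] at this
    rw [Finsupp.sum_apply] at this
    refine Eq.trans ?_ this
    apply Finsupp.sum_congr
    intro ij _
    by_cases h : ij.1 = i
    · subst h; simp [Finsupp.single_apply]
    · simp only [Finsupp.smul_apply, Finsupp.single_apply, if_neg h, smul_zero]
  -- the witness polynomial
  set q : Polynomial K := cf.sum fun ij a => if ij.1 = i then C a * X ^ ij.2 else 0 with hq
  have haeval : aeval (ee α β lam i) q = 0 := by
    have hpush : aeval (ee α β lam i) q
        = cf.sum fun ij a => a • (if ij.1 = i then ee α β lam i ^ ij.2 else 0) := by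
      rw [hq, map_finsuppSum]
      apply Finsupp.sum_congr
      intro ij _
      by_cases h : ij.1 = i
      · rw [if_pos h, if_pos h, map_mul, aeval_C, map_pow, aeval_X, Algebra.smul_def]
      · rw [if_neg h, if_neg h, map_zero, smul_zero]
    rw [hpush, hVi]
  have hq0 : q = 0 := ee_poly_inj hβ hsum hprod i q haeval
  have hcoeff := congrArg (fun r : Polynomial K => r.coeff j) hq0
  simp only [coeff_zero] at hcoeff
  rw [hq] at hcoeff
  classical
  have hco : (cf.sum fun ij a => if ij.1 = i then C a * X ^ ij.2 else 0).coeff j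
      = ∑ ij ∈ cf.support, (if ij = (i, j) then cf ij else 0) := by
    rw [Finsupp.sum, Polynomial.finset_sum_coeff]
    apply Finset.sum_congr rfl
    intro ij _
    by_cases h : ij.1 = i
    · rw [apply_ite (fun r : Polynomial K => r.coeff j), if_pos h, coeff_C_mul, coeff_X_pow]
      by_cases h2 : j = ij.2
      · rw [if_pos h2, if_pos (Prod.ext h h2.symm), mul_one]
      · rw [if_neg h2, if_neg (by rintro rfl; exact h2 rfl), mul_zero]
    · rw [apply_ite (fun r : Polynomial K => r.coeff j), if_neg h,
        if_neg (by simp [Prod.ext_iff, h]), coeff_zero]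
  rw [hco, Finset.sum_ite_eq' cf.support (i, j) (fun ij => cf ij)] at hcoeff
  by_cases hmem : (i, j) ∈ cf.support
  · rw [if_pos hmem] at hcoeff; simpa using hcoeff
  · simp [Finsupp.notMem_support_iff.mp hmem]

end Inj

end Aux

/-- For `β ≠ 0` and `λ, μ` the roots of `t² − αt − β`, there is a unique
`K`-algebra homomorphism `φ : Ã → A(α,β,1)` with `φ(u) = U`, `φ(ω) = DU − λUD`,
and this `φ` is injective. -/
theorem tildeA_embeds_in_downUp
    (K : Type) [Field K] [CharZero K] (α β lam μ : K) (hβ : β ≠ 0)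
    (hsum : lam + μ = α) (hprod : lam * μ = -β) :
    ∃ φ : TildeA K μ →ₐ[K] DownUp K α β 1,
      (φ (TildeA.u K μ) = DownUp.U K α β 1 ∧
        φ (TildeA.w K μ) =
          DownUp.D K α β 1 * DownUp.U K α β 1 - lam • (DownUp.U K α β 1 * DownUp.D K α β 1)) ∧
      Function.Injective φ ∧
      ∀ ψ : TildeA K μ →ₐ[K] DownUp K α β 1,
        (ψ (TildeA.u K μ) = DownUp.U K α β 1 ∧
          ψ (TildeA.w K μ) =
            DownUp.D K α β 1 * DownUp.U K α β 1 - lam • (DownUp.U K α β 1 * DownUp.D K α β 1)) →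
        ψ = φ := by
  have hWW : Aux.WW K α β lam
      = DownUp.D K α β 1 * DownUp.U K α β 1 - lam • (DownUp.U K α β 1 * DownUp.D K α β 1) := rfl
  refine ⟨Aux.phi K α β lam μ hβ hsum hprod,
    ⟨Aux.phi_u hβ hsum hprod, by rw [Aux.phi_w hβ hsum hprod, hWW]⟩,
    Aux.phi_injective hβ hsum hprod, ?_⟩
  rintro ψ ⟨h1, h2⟩
  exact Aux.unique_hom ψ _ (by rw [h1, Aux.phi_u]; rfl) (by rw [h2, Aux.phi_w hβ hsum hprod, hWW])
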